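/- Let P ⊆ ℝ^d be a reflexive polytope and let v, w be distinct lattice points on the boundary of P. Then exactly one of the following three statements holds: (1) v ∼ w (v and w lie in a common facet of P); (2) v + w = 0; (3) v + w lies on the boundary of P. -/

import Mathlib

open scoped BigOperators

noncomputable section

/-- The standard dot product on `ℝ^d`. -/
def dotProd {d : ℕ} (x y : Fin d → ℝ) : ℝ := ∑ i, x i * y i

/-- A point of `ℝ^d` is a lattice point (element of `ℤ^d`) if all coordinates are integers. -/
def IsLatticePoint {d : ℕ} (x : Fin d → ℝ) : Prop := ∀ i, ∃ n : ℤ, x i = (n : ℝ)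

/-- A lattice polytope is the convex hull of finitely many lattice points. -/
def IsLatticePolytope {d : ℕ} (P : Set (Fin d → ℝ)) : Prop :=
  ∃ V : Finset (Fin d → ℝ), (∀ v ∈ V, IsLatticePoint v) ∧ P = convexHull ℝ (V : Set (Fin d → ℝ))

/-- The dual polytope `P* = {y | ⟨x,y⟩ ≥ -1 ∀ x ∈ P}`. -/
def dualPolytope {d : ℕ} (P : Set (Fin d → ℝ)) : Set (Fin d → ℝ) :=
  {y | ∀ x ∈ P, -1 ≤ dotProd x y}

/-- A reflexive polytope: a full-dimensional lattice polytope with `0` in its interior whose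
dual polytope is again a lattice polytope. -/
def IsReflexive {d : ℕ} (P : Set (Fin d → ℝ)) : Prop :=
  IsLatticePolytope P ∧ (0 : Fin d → ℝ) ∈ interior P ∧ IsLatticePolytope (dualPolytope P)

/-- A face of `P`: the subset of `P` where some linear functional attains its maximum bound. -/
def IsFace {d : ℕ} (P F : Set (Fin d → ℝ)) : Prop :=
  ∃ (u : Fin d → ℝ) (c : ℝ), (∀ x ∈ P, dotProd u x ≤ c) ∧ F = {x ∈ P | dotProd u x = c}

/-- A facet of a `d`-dimensional polytope: a nonempty face of dimension `d - 1`. -/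
def IsFacet {d : ℕ} (P F : Set (Fin d → ℝ)) : Prop :=
  IsFace P F ∧ F.Nonempty ∧ Module.finrank ℝ (vectorSpan ℝ F) = d - 1

/-- `x ∼ y` : `x` and `y` lie in a common facet of `P`. -/
def SameFacet {d : ℕ} (P : Set (Fin d → ℝ)) (x y : Fin d → ℝ) : Prop :=
  ∃ F, IsFacet P F ∧ x ∈ F ∧ y ∈ F

/-- The star set of `x`: the union of all facets of `P` containing `x`. -/
def starSet {d : ℕ} (P : Set (Fin d → ℝ)) (x : Fin d → ℝ) : Set (Fin d → ℝ) :=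
  {y | SameFacet P x y}

/-- A family of lattice points forming a `ℤ`-basis of the lattice `ℤ^d`. -/
def IsZBasisFamily {d n : ℕ} (s : Fin n → (Fin d → ℝ)) : Prop :=
  LinearIndependent ℝ s ∧ (∀ i, IsLatticePoint (s i)) ∧
    ∀ z : Fin d → ℝ, IsLatticePoint z → ∃ c : Fin n → ℤ, z = ∑ i, (c i : ℝ) • s i

/-- A primitive lattice point: a nonzero lattice point such that no lattice point lies
strictly between `0` and it. -/
def IsPrimitivePoint {d : ℕ} (x : Fin d → ℝ) : Prop :=
  IsLatticePoint x ∧ x ≠ 0 ∧ ∀ y ∈ openSegment ℝ (0 : Fin d → ℝ) x, ¬ IsLatticePoint y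

/-- A Fano polytope: a full-dimensional lattice polytope with `0` in its interior all of whose
vertices are primitive lattice points. -/
def IsFanoPolytope {d : ℕ} (P : Set (Fin d → ℝ)) : Prop :=
  IsLatticePolytope P ∧ (0 : Fin d → ℝ) ∈ interior P ∧
    ∀ v ∈ Set.extremePoints ℝ P, IsPrimitivePoint v

/-- Canonical: the only interior lattice point is the origin. -/
def IsCanonicalPolytope {d : ℕ} (P : Set (Fin d → ℝ)) : Prop :=
  {x ∈ interior P | IsLatticePoint x} = {0}

/-- Terminal: the only lattice points of `P` are the origin and the vertices. -/
def IsTerminalPolytope {d : ℕ} (P : Set (Fin d → ℝ)) : Prop :=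
  {x ∈ P | IsLatticePoint x} = insert (0 : Fin d → ℝ) (Set.extremePoints ℝ P)

/-- Simplicial: every facet has exactly `d` vertices. -/
def IsSimplicial {d : ℕ} (P : Set (Fin d → ℝ)) : Prop :=
  ∀ F, IsFacet P F → (Set.extremePoints ℝ F).ncard = d

/-- Smooth: the vertices of every facet form a `ℤ`-basis of the lattice. -/
def IsSmoothPolytope {d : ℕ} (P : Set (Fin d → ℝ)) : Prop :=
  ∀ F, IsFacet P F → ∃ s : Fin d → (Fin d → ℝ),
    Set.extremePoints ℝ F = Set.range s ∧ IsZBasisFamily s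

/-- Semi-terminal: any two distinct vertices in a common facet are joined by a lattice-point
free segment. -/
def IsSemiTerminal {d : ℕ} (P : Set (Fin d → ℝ)) : Prop :=
  ∀ v ∈ Set.extremePoints ℝ P, ∀ w ∈ Set.extremePoints ℝ P, v ≠ w → SameFacet P v w →
    {x ∈ segment ℝ v w | IsLatticePoint x} = {v, w}

/-- The quotient space `ℝ^d / ℝv`. -/
abbrev QuotSpace {d : ℕ} (v : Fin d → ℝ) := (Fin d → ℝ) ⧸ (Submodule.span ℝ {v})

/-- The canonical projection `π_v : ℝ^d → ℝ^d/ℝv`. -/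
def projAlong {d : ℕ} (v : Fin d → ℝ) : (Fin d → ℝ) →ₗ[ℝ] QuotSpace v :=
  (Submodule.span ℝ {v}).mkQ

/-- The quotient lattice `ℤ^d/ℤv`, regarded as the image of `ℤ^d` in `ℝ^d/ℝv`. -/
def quotLattice {d : ℕ} (v : Fin d → ℝ) : Set (QuotSpace v) :=
  projAlong v '' {x | IsLatticePoint x}

/-- A primitive point of the quotient lattice `ℤ^d/ℤv`. -/
def QuotPrimitive {d : ℕ} (v : Fin d → ℝ) (q : QuotSpace v) : Prop :=
  q ∈ quotLattice v ∧ q ≠ 0 ∧ ∀ t ∈ openSegment ℝ (0 : QuotSpace v) q, t ∉ quotLattice v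

/-- A Fano polytope in the quotient space `ℝ^d/ℝv` with respect to the lattice `ℤ^d/ℤv`. -/
def QuotIsFanoPolytope {d : ℕ} (v : Fin d → ℝ) (Q : Set (QuotSpace v)) : Prop :=
  (∃ V : Finset (QuotSpace v), (∀ q ∈ V, q ∈ quotLattice v) ∧
      Q = convexHull ℝ (V : Set (QuotSpace v))) ∧
  (0 : QuotSpace v) ∈ interior Q ∧
  ∀ q ∈ Set.extremePoints ℝ Q, QuotPrimitive v q

/-- Unimodular equivalence: a real linear isomorphism mapping lattice onto lattice and one
polytope onto the other. -/
def LatticeEquivTo {d e : ℕ} (P : Set (Fin d → ℝ)) (Q : Set (Fin e → ℝ)) : Prop :=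
  ∃ f : (Fin d → ℝ) ≃ₗ[ℝ] (Fin e → ℝ),
    (∀ x, IsLatticePoint x ↔ IsLatticePoint (f x)) ∧ f '' P = Q

/-- The hexagon `Z₂ = conv(±(1,0), ±(0,1), ±(1,1)) ⊆ ℝ²`. -/
def Z2 : Set (Fin 2 → ℝ) :=
  convexHull ℝ ({![1,0], ![0,1], ![1,1], ![-1,0], ![0,-1], ![-1,-1]} : Set (Fin 2 → ℝ))

/-- The `j`-th coordinate pair of a point of `ℝ^{2m}`. -/
def pairCoords {m : ℕ} (x : Fin (2 * m) → ℝ) (j : Fin m) : Fin 2 → ℝ :=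
  fun i => x ⟨2 * (j : ℕ) + (i : ℕ), by have := j.isLt; have := i.isLt; omega⟩

/-- The `m`-fold product `Z₂ × ⋯ × Z₂ ⊆ ℝ^{2m}`. -/
def prodZ2 (m : ℕ) : Set (Fin (2 * m) → ℝ) := {x | ∀ j : Fin m, pairCoords x j ∈ Z2}

/-- The `j`-th coordinate pair of a point of `ℝ^{2m+1}` (first `2m` coordinates). -/
def pairCoords' {m : ℕ} (x : Fin (2 * m + 1) → ℝ) (j : Fin m) : Fin 2 → ℝ :=
  fun i => x ⟨2 * (j : ℕ) + (i : ℕ), by have := j.isLt; have := i.isLt; omega⟩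

/-- The product `[-1,1] × Z₂ × ⋯ × Z₂ ⊆ ℝ^{2m+1}` with `m` hexagon factors. -/
def boxProdZ2 (m : ℕ) : Set (Fin (2 * m + 1) → ℝ) :=
  {x | x ⟨2 * m, by omega⟩ ∈ Set.Icc (-1 : ℝ) 1 ∧ ∀ j : Fin m, pairCoords' x j ∈ Z2}

/-!
Write `P* = conv U` with `U ⊆ ℤ^d`; by the bipolar theorem `P = {x | ∀ u ∈ U, -1 ≤ ⟨x, u⟩}`.
If `s = v + w ≠ 0`, boundedness of `P` gives some `u ∈ U` with `⟨s, u⟩ < 0`; let `u₀ ∈ U`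
minimise `⟨s, ·⟩`. The minimum is an integer, negative, and at least `-2` because
`⟨v, u₀⟩, ⟨w, u₀⟩ ≥ -1`. If it is `-1`, then `s ∈ P` and `⟨s, u₀⟩ = -1`, so `s ∈ ∂P`. If it is
`-2`, then `⟨v, u₀⟩ = ⟨w, u₀⟩ = -1`, and a vertex of the face of `P*` cut out by these two
equations defines a facet of `P` through `v` and `w`.

Conversely, a facet `{⟨u, x⟩ = c}` of `P` has `c > 0` because `0 ∈ int P`, so if it contains `v`
and `w` then `⟨u, v + w⟩ = 2c > c` and `v + w ∉ P`; this rules out both `v + w = 0` and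
`v + w ∈ ∂P`.
-/

open Matrix Filter Topology

section DotProduct

variable {d : ℕ}

lemma dotProd_eq_dotProduct (x y : Fin d → ℝ) : dotProd x y = x ⬝ᵥ y := rfl

lemma dotProd_comm (x y : Fin d → ℝ) : dotProd x y = dotProd y x := dotProduct_comm x y

lemma isLinearMap_dotProd_left (y : Fin d → ℝ) : IsLinearMap ℝ (dotProd · y) :=
  ⟨fun a b => add_dotProduct a b y, fun c a => smul_dotProduct c a y⟩

lemma exists_dotProd_eq (f : Module.Dual ℝ (Fin d → ℝ)) : ∃ u, ∀ x, dotProd u x = f x :=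
  ⟨(dotProductEquiv ℝ (Fin d)).symm f, fun x =>
    LinearMap.congr_fun ((dotProductEquiv ℝ (Fin d)).apply_symm_apply f) x⟩

lemma IsLatticePoint.add {x y : Fin d → ℝ} (hx : IsLatticePoint x) (hy : IsLatticePoint y) :
    IsLatticePoint (x + y) := fun i => by
  obtain ⟨a, ha⟩ := hx i
  obtain ⟨b, hb⟩ := hy i
  exact ⟨a + b, by simp [ha, hb]⟩

lemma IsLatticePoint.exists_dotProd_eq_intCast {x y : Fin d → ℝ} (hx : IsLatticePoint x)
    (hy : IsLatticePoint y) : ∃ n : ℤ, dotProd x y = n := by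
  choose a ha using hx
  choose b hb using hy
  exact ⟨∑ i, a i * b i, by simp [dotProd, ha, hb]⟩

end DotProduct

section Convexity

lemma exists_gt_smul_mem_of_smul_mem_interior {E : Type*} [AddCommGroup E] [TopologicalSpace E]
    [Module ℝ E] [ContinuousSMul ℝ E] {P : Set E} {a : ℝ} {z : E} (h : a • z ∈ interior P) :
    ∃ t > a, t • z ∈ P := by
  have hev : ∀ᶠ t in 𝓝 a, t • z ∈ P :=
    (continuous_id.smul continuous_const).continuousAt.preimage_mem_nhds
      (mem_interior_iff_mem_nhds.1 h)
  obtain ⟨t, htP, hta⟩ :=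
    ((hev.filter_mono nhdsWithin_le_nhds).and (self_mem_nhdsWithin (s := Set.Ioi a))).exists
  exact ⟨t, hta, htP⟩

lemma finrank_vectorSpan_of_interior_nonempty {E : Type*} [NormedAddCommGroup E]
    [NormedSpace ℝ E] {P : Set E} (h : (interior P).Nonempty) :
    Module.finrank ℝ (vectorSpan ℝ P) = Module.finrank ℝ E := by
  have : affineSpan ℝ P = ⊤ := top_unique <|
    (isOpen_interior.affineSpan_eq_top h).ge.trans (affineSpan_mono ℝ interior_subset)
  rw [← direction_affineSpan, this, AffineSubspace.direction_top, finrank_top]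

lemma isExtreme_setOf_eq_of_forall_le {𝕜 E : Type*} [Field 𝕜] [LinearOrder 𝕜]
    [IsStrictOrderedRing 𝕜] [AddCommGroup E] [Module 𝕜 E] {A : Set E} (f : E →ₗ[𝕜] 𝕜) {c : 𝕜}
    (h : ∀ x ∈ A, c ≤ f x) : IsExtreme 𝕜 A {x ∈ A | f x = c} := by
  refine ⟨fun x hx => hx.1, fun x hx y hy z hz hzs => ⟨hx, ?_⟩⟩
  obtain ⟨a, b, ha, hb, hab, rfl⟩ := hzs
  have hfz := hz.2
  simp only [map_add, map_smul, smul_eq_mul] at hfz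
  have key : a * (f x - c) = b * (c - f y) := by linear_combination hfz - c * hab
  have := mul_nonpos_of_nonneg_of_nonpos hb.le (sub_nonpos.2 (h y hy))
  exact le_antisymm (by nlinarith) (h x hx)

lemma finrank_vectorSpan_add_one_of_span_eq_top {K E : Type*} [Field K] [AddCommGroup E]
    [Module K E] [FiniteDimensional K E] {F : Set E} (f : E →ₗ[K] K) {c : K} (hc : c ≠ 0)
    (hF : ∀ x ∈ F, f x = c) {x₀ : E} (hx₀ : x₀ ∈ F) (hspan : Submodule.span K F = ⊤) :
    Module.finrank K (vectorSpan K F) + 1 = Module.finrank K E := by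
  have hker : vectorSpan K F ≤ LinearMap.ker f := by
    rw [vectorSpan_def, Submodule.span_le]
    rintro _ ⟨a, ha, b, hb, rfl⟩
    simp [hF a ha, hF b hb]
  have hsup : vectorSpan K F ⊔ K ∙ x₀ = ⊤ := by
    rw [eq_top_iff, ← hspan, Submodule.span_le]
    intro x hx
    rw [← sub_add_cancel x x₀]
    exact Submodule.add_mem_sup (vsub_mem_vectorSpan K hx hx₀)
      (Submodule.mem_span_singleton_self x₀)
  have hinf : vectorSpan K F ⊓ K ∙ x₀ = ⊥ := by
    rw [eq_bot_iff]
    rintro z ⟨hzF, hzx⟩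
    obtain ⟨a, rfl⟩ := Submodule.mem_span_singleton.1 hzx
    have : a * c = 0 := by simpa [hF x₀ hx₀] using hker hzF
    simp [(mul_eq_zero.1 this).resolve_right hc]
  have hx₀0 : x₀ ≠ 0 := by
    rintro rfl
    exact hc (by simpa using (hF 0 hx₀).symm)
  have := Submodule.finrank_sup_add_finrank_inf_eq (vectorSpan K F) (K ∙ x₀)
  rw [hsup, hinf, finrank_top, finrank_bot, finrank_span_singleton hx₀0] at this
  omega

end Convexity

section Duality

variable {d : ℕ} {P : Set (Fin d → ℝ)}

lemma dualPolytope_convexHull (U : Set (Fin d → ℝ)) :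
    dualPolytope (convexHull ℝ U) = dualPolytope U := by
  ext y
  refine ⟨fun hy x hx => hy x (subset_convexHull ℝ U hx), fun hy => ?_⟩
  exact convexHull_min hy (convex_halfSpace_ge (isLinearMap_dotProd_left y) (-1))

lemma dualPolytope_dualPolytope (hc : Convex ℝ P) (hcl : IsClosed P) (h0 : 0 ∈ P) :
    dualPolytope (dualPolytope P) = P := by
  refine Set.Subset.antisymm (fun y hy => ?_) fun x hx u hu => dotProd_comm u x ▸ hu x hx
  by_contra hyP
  obtain ⟨f, c, hfP, hfy⟩ := geometric_hahn_banach_closed_point hc hcl hyP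
  have hc0 : 0 < c := by simpa using hfP 0 h0
  obtain ⟨u, hu⟩ := exists_dotProd_eq (f : Module.Dual ℝ (Fin d → ℝ))
  have hval : ∀ x, dotProd ((-c⁻¹) • u) x = -(f x / c) := fun x => by
    rw [dotProd_eq_dotProduct, smul_dotProduct, ← dotProd_eq_dotProduct, hu]
    simp [div_eq_inv_mul]
  have hmem : (-c⁻¹) • u ∈ dualPolytope P := fun x hx => by
    rw [dotProd_comm, hval, neg_le_neg_iff, div_le_one hc0]
    exact (hfP x hx).le
  have := hy _ hmem
  rw [hval, neg_le_neg_iff, div_le_one hc0] at this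
  linarith

lemma mem_iff_forall_neg_one_le_dotProd (hc : Convex ℝ P) (hcl : IsClosed P) (h0 : 0 ∈ P)
    {U : Set (Fin d → ℝ)} (hU : dualPolytope P = convexHull ℝ U) {y : Fin d → ℝ} :
    y ∈ P ↔ ∀ u ∈ U, -1 ≤ dotProd y u := by
  conv_lhs => rw [← dualPolytope_dualPolytope hc hcl h0, hU, dualPolytope_convexHull]
  simp only [dualPolytope, Set.mem_ofPred_eq, dotProd_comm _ y]

lemma mem_frontier_of_dotProd_eq_neg_one {z u : Fin d → ℝ} (hz : z ∈ P)
    (hu : u ∈ dualPolytope P) (hzu : dotProd z u = -1) : z ∈ frontier P := by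
  refine ⟨subset_closure hz, fun hint => ?_⟩
  obtain ⟨t, ht, htP⟩ := exists_gt_smul_mem_of_smul_mem_interior (a := 1) (by rwa [one_smul])
  have := hu _ htP
  rw [dotProd_eq_dotProduct, smul_dotProduct, ← dotProd_eq_dotProduct, hzu, smul_eq_mul] at this
  linarith

lemma exists_dotProd_neg (hb : Bornology.IsBounded P) (hc : Convex ℝ P) (hcl : IsClosed P)
    (h0 : 0 ∈ P) {U : Set (Fin d → ℝ)} (hU : dualPolytope P = convexHull ℝ U)
    {s : Fin d → ℝ} (hs : s ≠ 0) : ∃ u ∈ U, dotProd s u < 0 := by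
  by_contra! h
  have hray : ∀ t : ℝ, 0 ≤ t → t • s ∈ P := fun t ht =>
    (mem_iff_forall_neg_one_le_dotProd hc hcl h0 hU).2 fun u hu => by
      have := h u hu
      simp only [dotProd_eq_dotProduct, smul_dotProduct, smul_eq_mul] at this ⊢
      nlinarith
  obtain ⟨R, hR⟩ := hb.exists_norm_le
  have hR0 : 0 ≤ R := by simpa using hR 0 h0
  have hsn : 0 < ‖s‖ := norm_pos_iff.2 hs
  have := hR _ (hray ((R + 1) / ‖s‖) (by positivity))
  rw [norm_smul, Real.norm_of_nonneg (by positivity), div_mul_cancel₀ _ hsn.ne'] at this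
  linarith

end Duality

section Facets

variable {d : ℕ}

lemma eventually_add_smul_mem_dualPolytope {V : Finset (Fin d → ℝ)} {u y : Fin d → ℝ}
    (hu : u ∈ dualPolytope (convexHull ℝ (V : Set (Fin d → ℝ))))
    (hy : ∀ x ∈ V, dotProd x u = -1 → dotProd x y = 0) :
    ∀ᶠ t in 𝓝 (0 : ℝ), u + t • y ∈ dualPolytope (convexHull ℝ (V : Set (Fin d → ℝ))) := by
  rw [dualPolytope_convexHull] at hu ⊢
  have hlin : ∀ x (t : ℝ), dotProd x (u + t • y) = dotProd x u + t * dotProd x y := fun x t => by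
    simp [dotProd_eq_dotProduct, dotProduct_add, dotProduct_smul]
  have hx : ∀ x ∈ V, ∀ᶠ t in 𝓝 (0 : ℝ), -1 ≤ dotProd x (u + t • y) := fun x hx => by
    simp only [hlin]
    rcases (hu x hx).eq_or_lt with h | h
    · exact Eventually.of_forall fun t => by simp [← h, hy x hx h.symm]
    · have : Tendsto (fun t : ℝ => dotProd x u + t * dotProd x y) (𝓝 0) (𝓝 (dotProd x u)) :=
        (continuous_const.add (continuous_id.mul continuous_const)).tendsto' _ _ (by simp)
      exact (this.eventually (lt_mem_nhds h)).mono fun _ => le_of_lt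
  simpa [dualPolytope] using (eventually_all_finset V).2 hx

lemma span_eq_top_of_mem_extremePoints_dualPolytope {V : Finset (Fin d → ℝ)} {u : Fin d → ℝ}
    (hu : u ∈ (dualPolytope (convexHull ℝ (V : Set (Fin d → ℝ)))).extremePoints ℝ) :
    Submodule.span ℝ {x | x ∈ V ∧ dotProd x u = -1} = ⊤ := by
  -- Otherwise a normal `y` to the active vertices lets `u` move both ways inside `P*`.
  by_contra hne
  obtain ⟨f, hf0, hker⟩ := Submodule.exists_le_ker_of_lt_top _ (lt_top_iff_ne_top.2 hne)
  obtain ⟨y, hy⟩ := exists_dotProd_eq f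
  have hy0 : y ≠ 0 := by
    rintro rfl
    exact hf0 (LinearMap.ext fun x => by simp [← hy, dotProd_eq_dotProduct])
  have hperp : ∀ x ∈ V, dotProd x u = -1 → dotProd x y = 0 := fun x hx hxu => by
    rw [dotProd_comm, hy]
    exact hker (Submodule.subset_span ⟨hx, hxu⟩)
  obtain ⟨ε, hε, hball⟩ :=
    Metric.eventually_nhds_iff.1 (eventually_add_smul_mem_dualPolytope hu.1 hperp)
  have hpos := hball (y := ε / 2) (by simp [abs_of_pos hε, hε])
  have hneg := hball (y := -(ε / 2)) (by simp [abs_of_pos hε, hε])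
  have hseg : u ∈ openSegment ℝ (u + (ε / 2) • y) (u + (-(ε / 2)) • y) :=
    ⟨1 / 2, 1 / 2, by norm_num, by norm_num, by norm_num, by module⟩
  have hεy : (ε / 2) • y = 0 := by simpa using hu.2 hpos hneg hseg
  exact hy0 ((smul_eq_zero.1 hεy).resolve_left (by positivity))

lemma isFacet_of_mem_extremePoints_dualPolytope {V : Finset (Fin d → ℝ)} {u x₀ : Fin d → ℝ}
    (hu : u ∈ (dualPolytope (convexHull ℝ (V : Set (Fin d → ℝ)))).extremePoints ℝ)
    (hx₀ : x₀ ∈ convexHull ℝ (V : Set (Fin d → ℝ))) (hx₀u : dotProd x₀ u = -1) :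
    IsFacet (convexHull ℝ (V : Set (Fin d → ℝ)))
      {x ∈ convexHull ℝ (V : Set (Fin d → ℝ)) | dotProd (-u) x = 1} := by
  have hneg : ∀ x, dotProd (-u) x = -dotProd x u := fun x => by
    simp [dotProd_eq_dotProduct, dotProduct_comm]
  have hx₀F : x₀ ∈ {x ∈ convexHull ℝ (V : Set (Fin d → ℝ)) | dotProd (-u) x = 1} :=
    ⟨hx₀, by rw [hneg, hx₀u, neg_neg]⟩
  refine ⟨⟨-u, 1, fun x hx => ?_, rfl⟩, ⟨x₀, hx₀F⟩, ?_⟩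
  · rw [hneg, neg_le]
    exact hu.1 x hx
  have hspan := eq_top_iff.2 <| (span_eq_top_of_mem_extremePoints_dualPolytope hu).ge.trans <|
    Submodule.span_mono (s := {x | x ∈ V ∧ dotProd x u = -1})
      (t := {x ∈ convexHull ℝ (V : Set (Fin d → ℝ)) | dotProd (-u) x = 1})
      fun x hx => ⟨subset_convexHull ℝ _ hx.1, by rw [hneg, hx.2, neg_neg]⟩
  have := finrank_vectorSpan_add_one_of_span_eq_top (dotProductEquiv ℝ (Fin d) (-u))
    one_ne_zero (fun x hx => hx.2) hx₀F hspan
  rw [Module.finrank_fin_fun] at this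
  omega

lemma sameFacet_of_dotProd_eq_neg_one {V U : Finset (Fin d → ℝ)}
    (hU : dualPolytope (convexHull ℝ (V : Set (Fin d → ℝ))) = convexHull ℝ (U : Set (Fin d → ℝ)))
    {v w u : Fin d → ℝ} (hv : v ∈ convexHull ℝ (V : Set (Fin d → ℝ)))
    (hw : w ∈ convexHull ℝ (V : Set (Fin d → ℝ)))
    (hu : u ∈ dualPolytope (convexHull ℝ (V : Set (Fin d → ℝ))))
    (hvu : dotProd v u = -1) (hwu : dotProd w u = -1) :
    SameFacet (convexHull ℝ (V : Set (Fin d → ℝ))) v w := by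
  set D := dualPolytope (convexHull ℝ (V : Set (Fin d → ℝ)))
  have hface : ∀ x ∈ convexHull ℝ (V : Set (Fin d → ℝ)),
      IsExtreme ℝ D {u ∈ D | dotProd x u = -1} := fun x hx =>
    isExtreme_setOf_eq_of_forall_le (dotProductEquiv ℝ (Fin d) x) fun u hu => hu x hx
  have hS := (hface v hv).inter (hface w hw)
  have hD : IsCompact D := hU ▸ U.finite_toSet.isCompact_convexHull ℝ
  have hcont : ∀ x : Fin d → ℝ, Continuous (dotProd x) := fun x =>
    continuous_const.dotProduct continuous_id
  have hSc : IsCompact ({u ∈ D | dotProd v u = -1} ∩ {u ∈ D | dotProd w u = -1}) :=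
    hD.of_isClosed_subset ((hD.isClosed.inter (isClosed_eq (hcont v) continuous_const)).inter
      (hD.isClosed.inter (isClosed_eq (hcont w) continuous_const))) hS.subset
  obtain ⟨u', hu'⟩ := hSc.extremePoints_nonempty ⟨u, ⟨hu, hvu⟩, hu, hwu⟩
  obtain ⟨⟨-, hvu'⟩, -, hwu'⟩ := hu'.1
  have hneg : ∀ x, dotProd (-u') x = 1 ↔ dotProd x u' = -1 := fun x => by
    simp [dotProd_eq_dotProduct, dotProduct_comm, neg_eq_iff_eq_neg]
  exact ⟨_, isFacet_of_mem_extremePoints_dualPolytope (hS.extremePoints_subset_extremePoints hu')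
    hv hvu', ⟨hv, (hneg v).2 hvu'⟩, ⟨hw, (hneg w).2 hwu'⟩⟩

end Facets

section Trichotomy

variable {d : ℕ} {P : Set (Fin d → ℝ)}

lemma IsLatticePolytope.isCompact (hP : IsLatticePolytope P) : IsCompact P := by
  obtain ⟨V, -, rfl⟩ := hP
  exact V.finite_toSet.isCompact_convexHull ℝ

lemma pos_of_forall_dotProd_le (h0 : 0 ∈ interior P) {u : Fin d → ℝ} (hu : u ≠ 0) {c : ℝ}
    (hc : ∀ x ∈ P, dotProd u x ≤ c) : 0 < c := by
  obtain ⟨t, ht, htP⟩ := exists_gt_smul_mem_of_smul_mem_interior (a := 0) (z := u)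
    (by rwa [zero_smul])
  have huu : 0 < u ⬝ᵥ u := by simpa using dotProduct_star_self_pos_iff.2 hu
  calc 0 < t * (u ⬝ᵥ u) := mul_pos ht huu
    _ = dotProd u (t • u) := by simp [dotProd_eq_dotProduct]
    _ ≤ c := hc _ htP

lemma add_notMem_of_sameFacet (h0 : 0 ∈ interior P) (hd : d ≠ 0) {v w : Fin d → ℝ}
    (h : SameFacet P v w) : v + w ∉ P := by
  obtain ⟨F, ⟨⟨u, c, hle, rfl⟩, ⟨x, -, hxc⟩, hdim⟩, ⟨-, hvc⟩, ⟨-, hwc⟩⟩ := h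
  intro hvw
  rcases eq_or_ne u 0 with rfl | hu
  · have hF : {x ∈ P | dotProd 0 x = c} = P := by
      ext y
      simp [← hxc, dotProd_eq_dotProduct]
    rw [hF, finrank_vectorSpan_of_interior_nonempty ⟨0, h0⟩, Module.finrank_fin_fun] at hdim
    omega
  · have := hle _ hvw
    rw [dotProd_eq_dotProduct, dotProduct_add] at this
    have := pos_of_forall_dotProd_le h0 hu hle
    simp only [dotProd_eq_dotProduct] at hvc hwc
    linarith

lemma sameFacet_or_add_eq_zero_or_add_mem_frontier (hP : IsReflexive P) {v w : Fin d → ℝ}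
    (hv : v ∈ P) (hw : w ∈ P) (hvL : IsLatticePoint v) (hwL : IsLatticePoint w) :
    SameFacet P v w ∨ v + w = 0 ∨ v + w ∈ frontier P := by
  obtain ⟨hPL, h0, U, hUL, hU⟩ := hP
  have hK := hPL.isCompact
  obtain ⟨V, -, rfl⟩ := hPL
  have hc := convex_convexHull ℝ (V : Set (Fin d → ℝ))
  rcases eq_or_ne (v + w) 0 with hs | hs
  · exact Or.inr (Or.inl hs)
  obtain ⟨u, huU, hu⟩ := exists_dotProd_neg hK.isBounded hc hK.isClosed (interior_subset h0) hU hs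
  obtain ⟨u₀, hu₀U, hmin⟩ := U.exists_min_image (dotProd (v + w)) ⟨u, huU⟩
  obtain ⟨n, hn⟩ := (hvL.add hwL).exists_dotProd_eq_intCast (hUL u₀ hu₀U)
  have hu₀ : u₀ ∈ dualPolytope _ := hU ▸ subset_convexHull ℝ _ hu₀U
  have hsplit : dotProd (v + w) u₀ = dotProd v u₀ + dotProd w u₀ := add_dotProduct v w u₀
  have hv₀ := hu₀ v hv
  have hw₀ := hu₀ w hw
  have hn' : n = -1 ∨ n = -2 := by
    have hneg : (n : ℝ) < 0 := hn ▸ (hmin u huU).trans_lt hu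
    have hge : (-2 : ℝ) ≤ n := by linarith
    have : n < 0 := by exact_mod_cast hneg
    have : -2 ≤ n := by exact_mod_cast hge
    omega
  rcases hn' with rfl | rfl <;> push_cast at hn
  · refine Or.inr (Or.inr (mem_frontier_of_dotProd_eq_neg_one ?_ hu₀ hn))
    exact (mem_iff_forall_neg_one_le_dotProd hc hK.isClosed (interior_subset h0) hU).2
      fun u' hu' => hn ▸ hmin u' hu'
  · exact Or.inl (sameFacet_of_dotProd_eq_neg_one hU hv hw hu₀ (by linarith) (by linarith))

end Trichotomy

theorem pair_trichotomy_general {d : ℕ} (P : Set (Fin d → ℝ)) (hP : IsReflexive P)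
    (v w : Fin d → ℝ) (hv : v ∈ frontier P) (hw : w ∈ frontier P)
    (hvL : IsLatticePoint v) (hwL : IsLatticePoint w) :
    (SameFacet P v w ∨ v + w = 0 ∨ v + w ∈ frontier P) ∧
    ¬ (SameFacet P v w ∧ v + w = 0) ∧
    ¬ (SameFacet P v w ∧ v + w ∈ frontier P) ∧
    ¬ (v + w = 0 ∧ v + w ∈ frontier P) := by
  have h0 : 0 ∈ interior P := hP.2.1
  have hfr : frontier P ⊆ P := hP.1.isCompact.isClosed.frontier_subset
  have hd : d ≠ 0 := by
    rintro rfl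
    have : P = Set.univ := Set.eq_univ_of_forall fun x => Subsingleton.elim 0 x ▸ interior_subset h0
    simp [this] at hv
  have hnot := add_notMem_of_sameFacet (v := v) (w := w) h0 hd
  exact ⟨sameFacet_or_add_eq_zero_or_add_mem_frontier hP (hfr hv) (hfr hw) hvL hwL,
    fun ⟨hF, h⟩ => hnot hF (h ▸ interior_subset h0), fun ⟨hF, h⟩ => hnot hF (hfr h),
    fun ⟨h, h'⟩ => (h ▸ h').2 h0⟩

/-- For distinct boundary lattice points `v, w` of a reflexive polytope, exactly
one of the following holds: they lie in a common facet, `v + w = 0`, or `v + w ∈ ∂P`. -/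
theorem pair_trichotomy {d : ℕ} (P : Set (Fin d → ℝ)) (hP : IsReflexive P)
    (v w : Fin d → ℝ) (hv : v ∈ frontier P) (hw : w ∈ frontier P)
    (hvL : IsLatticePoint v) (hwL : IsLatticePoint w) (hne : v ≠ w) :
    (SameFacet P v w ∨ v + w = 0 ∨ v + w ∈ frontier P) ∧
    ¬ (SameFacet P v w ∧ v + w = 0) ∧
    ¬ (SameFacet P v w ∧ v + w ∈ frontier P) ∧
    ¬ (v + w = 0 ∧ v + w ∈ frontier P) :=
  pair_trichotomy_general P hP v w hv hw hvL hwL
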